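/- Suppose Û : ℝ × [0,∞) → ℂⁿ satisfies the pointwise bound |Û(ξ,t)|² ≤ c̃ e^{−c f(ξ) t} |Û₀(ξ)|² with c, c̃ > 0, where f(ξ) ≥ (1/5)ξ⁶ for |ξ| ≤ 1 and f(ξ) ≥ (1/5)ξ^{−2} for |ξ| > 1. If Û₀ is bounded with ‖Û₀‖_∞ ≤ M and ∫_ℝ |ξ|^{2(j+ℓ)}|Û₀(ξ)|² dξ < ∞ for given j, ℓ ∈ ℕ, then there is c₀ > 0 such that (∫_ℝ ξ^{2j}|Û(ξ,t)|² dξ)^{1/2} ≤ c₀ (1+t)^{−1/12 − j/6} M + c₀ (1+t)^{−ℓ/2} (∫_ℝ |ξ|^{2(j+ℓ)}|Û₀(ξ)|² dξ)^{1/2} for all t ≥ 0. -/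

import Mathlib

/-!
Split the frequency line at `|ξ| = 1` and write `a = c / 5`. Replacing `t` by `1 + t` in the
exponent costs only a factor `exp a`, which lets `t = 0` be treated together with large `t`.
For `|ξ| ≤ 1` the symbol gives `exp (-a (1 + t) ξ⁶)`, and
`∫ ξ^(2j) exp (-b ξ⁶) dξ = b^(-(2j+1)/6) Γ((2j+1)/6) / 3` yields the rate `(1 + t)^(-(2j+1)/6)`
against `‖Û₀‖_∞²`. For `|ξ| > 1` the symbol is only `exp (-a (1 + t) ξ⁻²)`, and
`exp (-x) ≤ ℓ! / x^ℓ` trades the decay `(1 + t)^(-ℓ)` for the extra weight `ξ^(2ℓ)`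
(regularity loss). Taking square roots of the sum of the two bounds gives the estimate.
-/

open MeasureTheory Real Set Nat

theorem integrable_comp_abs_of_integrableOn_Ioi {f : ℝ → ℝ} (hf : IntegrableOn f (Ioi 0)) :
    Integrable fun x => f |x| := by
  have hpos : IntegrableOn (fun x => f |x|) (Ioi 0) :=
    hf.congr_fun (fun x hx => by rw [abs_of_pos hx]) measurableSet_Ioi
  have hneg : IntegrableOn (fun x => f |x|) (Iic 0) := by
    rw [← Measure.map_neg_eq_self (volume : Measure ℝ),
      measurableEmbedding_neg.integrableOn_map_iff]
    simp_rw [Function.comp_def, abs_neg, neg_preimage, neg_Iic, neg_zero]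
    exact (integrableOn_Ici_iff_integrableOn_Ioi).mpr hpos
  rw [← integrableOn_univ, ← Iic_union_Ioi (a := (0 : ℝ))]
  exact hneg.union hpos

theorem pow_two_mul_mul_exp_eq_abs_rpow (b x : ℝ) (j k : ℕ) :
    x ^ (2 * j) * exp (-b * x ^ (2 * k)) =
      |x| ^ ((2 * j : ℕ) : ℝ) * exp (-b * |x| ^ ((2 * k : ℕ) : ℝ)) := by
  simp only [rpow_natCast, Even.pow_abs (even_two_mul _)]

theorem integrable_pow_two_mul_mul_exp_neg_mul_pow_two_mul {b : ℝ} (hb : 0 < b) (j : ℕ)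
    {k : ℕ} (hk : 0 < k) :
    Integrable fun x : ℝ => x ^ (2 * j) * exp (-b * x ^ (2 * k)) := by
  simp_rw [pow_two_mul_mul_exp_eq_abs_rpow]
  exact integrable_comp_abs_of_integrableOn_Ioi (f := fun y => y ^ _ * exp (-b * y ^ _))
    (integrableOn_rpow_mul_exp_neg_mul_rpow (neg_one_lt_zero.trans_le (Nat.cast_nonneg _))
      (by positivity) hb)

theorem integral_pow_two_mul_mul_exp_neg_mul_pow_two_mul {b : ℝ} (hb : 0 < b) (j : ℕ)
    {k : ℕ} (hk : 0 < k) :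
    ∫ x : ℝ, x ^ (2 * j) * exp (-b * x ^ (2 * k)) =
      b ^ (-(2 * j + 1 : ℝ) / (2 * k)) * Gamma ((2 * j + 1) / (2 * k)) / k := by
  simp_rw [pow_two_mul_mul_exp_eq_abs_rpow]
  rw [integral_comp_abs (f := fun y => y ^ _ * exp (-b * y ^ _)),
    integral_rpow_mul_exp_neg_mul_rpow (by positivity)
      (neg_one_lt_zero.trans_le (Nat.cast_nonneg _)) hb]
  push_cast
  field_simp

theorem exp_neg_le_factorial_div_pow {x : ℝ} (hx : 0 < x) (m : ℕ) :
    exp (-x) ≤ m ! / x ^ m := by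
  rw [exp_neg, inv_le_comm₀ (exp_pos x) (by positivity), inv_div]
  exact pow_div_factorial_le_exp x hx.le m

theorem exp_neg_mul_le_exp_mul_exp_neg {a c f t y : ℝ} (ha : 0 ≤ a) (ht : 0 ≤ t) (hy : y ≤ 1)
    (hf : a * y ≤ c * f) : exp (-c * f * t) ≤ exp a * exp (-(a * (1 + t)) * y) := by
  rw [← exp_add, exp_le_exp]
  nlinarith [mul_le_mul_of_nonneg_right hf ht, mul_nonneg ha (sub_nonneg.2 hy)]

theorem exp_neg_mul_le_of_abs_le_one {c f t ξ : ℝ} (hc : 0 < c) (ht : 0 ≤ t) (hξ : |ξ| ≤ 1)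
    (hf : f ≥ 1 / 5 * ξ ^ 6) :
    exp (-c * f * t) ≤ exp (c / 5) * exp (-(c / 5 * (1 + t)) * ξ ^ 6) := by
  refine exp_neg_mul_le_exp_mul_exp_neg (by positivity) ht ?_ (by nlinarith)
  rw [← Even.pow_abs ⟨3, rfl⟩]
  exact pow_le_one₀ (abs_nonneg ξ) hξ

theorem exp_neg_mul_le_of_one_lt_abs {c f t ξ : ℝ} (hc : 0 < c) (ht : 0 ≤ t) (hξ : 1 < |ξ|)
    (hf : f ≥ 1 / 5 * ξ ^ (-2 : ℤ)) (m : ℕ) :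
    exp (-c * f * t) ≤ exp (c / 5) * m ! / (c / 5 * (1 + t)) ^ m * ξ ^ (2 * m) := by
  have hξ2 : 1 < ξ ^ 2 := by rw [← sq_abs]; exact one_lt_pow₀ hξ two_ne_zero
  rw [zpow_neg, zpow_ofNat] at hf
  calc exp (-c * f * t) ≤ exp (c / 5) * exp (-(c / 5 * (1 + t) * (ξ ^ 2)⁻¹)) := by
        rw [← neg_mul]
        exact exp_neg_mul_le_exp_mul_exp_neg (by positivity) ht (inv_le_one_of_one_le₀ hξ2.le)
          (by nlinarith)
    _ ≤ exp (c / 5) * (m ! / (c / 5 * (1 + t) * (ξ ^ 2)⁻¹) ^ m) := by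
        gcongr
        exact exp_neg_le_factorial_div_pow (by positivity) m
    _ = exp (c / 5) * m ! / (c / 5 * (1 + t)) ^ m * ξ ^ (2 * m) := by
        rw [mul_pow, inv_pow, pow_mul]
        field_simp

theorem sqrt_le_of_le_mul_sq_add_mul_sq {x A B u v : ℝ} (hA : 0 ≤ A) (hB : 0 ≤ B) (hu : 0 ≤ u)
    (hv : 0 ≤ v) (h : x ≤ A * u ^ 2 + B * v ^ 2) : √x ≤ √(A + B) * u + √(A + B) * v := by
  have hx : x ≤ (A + B) * (u + v) ^ 2 := by
    nlinarith [mul_nonneg hA (sq_nonneg v), mul_nonneg hB (sq_nonneg u), mul_nonneg hu hv,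
      mul_nonneg (add_nonneg hA hB) (mul_nonneg hu hv)]
  calc √x ≤ √((A + B) * (u + v) ^ 2) := sqrt_le_sqrt hx
    _ = √(A + B) * u + √(A + B) * v := by
      rw [sqrt_mul (by positivity), sqrt_sq (by positivity)]; ring

theorem pow_two_mul_mul_le_low_add_high {c ctilde f t ξ u u₀ M : ℝ} (j ℓ : ℕ) (hc : 0 < c)
    (hct : 0 ≤ ctilde) (ht : 0 ≤ t) (hu : u ≤ ctilde * exp (-c * f * t) * u₀) (hu₀ : 0 ≤ u₀)
    (hM : u₀ ≤ M ^ 2) (hlow : |ξ| ≤ 1 → f ≥ 1 / 5 * ξ ^ 6)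
    (hhigh : 1 < |ξ| → f ≥ 1 / 5 * ξ ^ (-2 : ℤ)) :
    ξ ^ (2 * j) * u ≤
      ctilde * exp (c / 5) * M ^ 2 * (ξ ^ (2 * j) * exp (-(c / 5 * (1 + t)) * ξ ^ 6)) +
        ctilde * exp (c / 5) * ℓ ! / (c / 5 * (1 + t)) ^ ℓ * (|ξ| ^ (2 * (j + ℓ)) * u₀) := by
  have hξj : 0 ≤ ξ ^ (2 * j) := (even_two_mul j).pow_nonneg ξ
  have hu' : ξ ^ (2 * j) * u ≤ ctilde * ξ ^ (2 * j) * (exp (-c * f * t) * u₀) := by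
    nlinarith [mul_le_mul_of_nonneg_left hu hξj]
  rcases le_or_gt |ξ| 1 with hξ | hξ
  · calc ξ ^ (2 * j) * u ≤ ctilde * ξ ^ (2 * j) *
          (exp (c / 5) * exp (-(c / 5 * (1 + t)) * ξ ^ 6) * M ^ 2) := by
          exact hu'.trans (by gcongr; exact exp_neg_mul_le_of_abs_le_one hc ht hξ (hlow hξ))
      _ ≤ _ := by
          apply le_add_of_le_of_nonneg (le_of_eq (by ring))
          positivity
  · calc ξ ^ (2 * j) * u ≤ ctilde * ξ ^ (2 * j) *
          (exp (c / 5) * ℓ ! / (c / 5 * (1 + t)) ^ ℓ * ξ ^ (2 * ℓ) * u₀) := by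
          exact hu'.trans (by gcongr; exact exp_neg_mul_le_of_one_lt_abs hc ht hξ (hhigh hξ) ℓ)
      _ ≤ _ := by
          apply le_add_of_nonneg_of_le (by positivity) (le_of_eq _)
          rw [(even_two_mul _).pow_abs, Nat.mul_add, pow_add]
          ring

theorem integral_pow_two_mul_mul_le {c ctilde t M : ℝ} {f u u₀ : ℝ → ℝ} (j ℓ : ℕ) (hc : 0 < c)
    (hct : 0 ≤ ctilde) (ht : 0 ≤ t) (hu : ∀ ξ, u ξ ≤ ctilde * exp (-c * f ξ * t) * u₀ ξ)
    (hu_nonneg : ∀ ξ, 0 ≤ u ξ) (hu₀ : ∀ ξ, 0 ≤ u₀ ξ) (hM : ∀ ξ, u₀ ξ ≤ M ^ 2)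
    (hlow : ∀ ξ : ℝ, |ξ| ≤ 1 → f ξ ≥ 1 / 5 * ξ ^ 6)
    (hhigh : ∀ ξ : ℝ, 1 < |ξ| → f ξ ≥ 1 / 5 * ξ ^ (-2 : ℤ))
    (hint : Integrable fun ξ : ℝ => |ξ| ^ (2 * (j + ℓ)) * u₀ ξ) :
    ∫ ξ, ξ ^ (2 * j) * u ξ ≤
      ctilde * exp (c / 5) * (c / 5) ^ (-(2 * j + 1 : ℝ) / 6) * Gamma ((2 * j + 1) / 6) / 3 *
          ((1 + t) ^ (-(1 / 12 : ℝ) - j / 6) * M) ^ 2 +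
        ctilde * exp (c / 5) * ℓ ! / (c / 5) ^ ℓ *
          ((1 + t) ^ (-(ℓ : ℝ) / 2) * √(∫ ξ, |ξ| ^ (2 * (j + ℓ)) * u₀ ξ)) ^ 2 := by
  set a := c / 5
  have hs : 0 < 1 + t := by linarith
  have hint_low := (integrable_pow_two_mul_mul_exp_neg_mul_pow_two_mul (b := a * (1 + t))
    (by positivity) j (k := 3) (by norm_num)).const_mul (ctilde * exp a * M ^ 2)
  have hlow_eq : ∫ ξ : ℝ, ξ ^ (2 * j) * exp (-(a * (1 + t)) * ξ ^ 6) =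
      (a * (1 + t)) ^ (-(2 * j + 1 : ℝ) / 6) * Gamma ((2 * j + 1) / 6) / 3 := by
    simpa only [Nat.reduceMul, Nat.cast_ofNat, show (2 : ℝ) * 3 = 6 by norm_num]
      using integral_pow_two_mul_mul_exp_neg_mul_pow_two_mul (by positivity) j (k := 3)
        (by norm_num)
  calc ∫ ξ, ξ ^ (2 * j) * u ξ
      ≤ ∫ ξ, ctilde * exp a * M ^ 2 * (ξ ^ (2 * j) * exp (-(a * (1 + t)) * ξ ^ 6)) +
          ctilde * exp a * ℓ ! / (a * (1 + t)) ^ ℓ * (|ξ| ^ (2 * (j + ℓ)) * u₀ ξ) :=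
        integral_mono_of_nonneg
          (ae_of_all _ fun ξ => mul_nonneg ((even_two_mul j).pow_nonneg ξ) (hu_nonneg ξ))
          (hint_low.add (hint.const_mul _))
          (ae_of_all _ fun ξ => pow_two_mul_mul_le_low_add_high j ℓ hc hct ht (hu ξ) (hu₀ ξ) (hM ξ)
            (hlow ξ) (hhigh ξ))
    _ = _ := by
        have hsq_low : ((1 + t) ^ (-(1 / 12 : ℝ) - j / 6) * M) ^ 2 =
            (1 + t) ^ (-(2 * j + 1 : ℝ) / 6) * M ^ 2 := by
          rw [mul_pow, ← rpow_mul_natCast hs.le]; ring_nf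
        have hsq_high : ((1 + t) ^ (-(ℓ : ℝ) / 2) * √(∫ ξ, |ξ| ^ (2 * (j + ℓ)) * u₀ ξ)) ^ 2 =
            ((1 + t) ^ ℓ)⁻¹ * ∫ ξ, |ξ| ^ (2 * (j + ℓ)) * u₀ ξ := by
          rw [mul_pow, sq_sqrt (integral_nonneg fun ξ => mul_nonneg (by positivity) (hu₀ ξ)),
            ← rpow_mul_natCast hs.le, ← rpow_natCast, ← rpow_neg hs.le]
          push_cast
          ring_nf
        rw [integral_add hint_low (hint.const_mul _), integral_const_mul, integral_const_mul,
          hlow_eq, hsq_low, hsq_high, mul_rpow (by positivity) hs.le, mul_pow]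
        field_simp

theorem stmt_15 (c ctilde : ℝ) (hc : 0 < c) (hct : 0 < ctilde)
    (n : ℕ) (Uhat : ℝ → ℝ → EuclideanSpace ℂ (Fin n))
    (U₀hat : ℝ → EuclideanSpace ℂ (Fin n)) (f : ℝ → ℝ) (M : ℝ) (j ℓ : ℕ)
    (hbound : ∀ ξ t : ℝ, 0 ≤ t →
      ‖Uhat ξ t‖ ^ 2 ≤ ctilde * Real.exp (-c * f ξ * t) * ‖U₀hat ξ‖ ^ 2)
    (hflow : ∀ ξ : ℝ, |ξ| ≤ 1 → f ξ ≥ (1 / 5) * ξ ^ 6)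
    (hfhigh : ∀ ξ : ℝ, 1 < |ξ| → f ξ ≥ (1 / 5) * ξ ^ (-2 : ℤ))
    (hM : ∀ ξ : ℝ, ‖U₀hat ξ‖ ≤ M)
    (hint : Integrable (fun ξ : ℝ => |ξ| ^ (2 * (j + ℓ)) * ‖U₀hat ξ‖ ^ 2)) :
    ∃ c₀ > 0, ∀ t : ℝ, 0 ≤ t →
      Real.sqrt (∫ ξ : ℝ, ξ ^ (2 * j) * ‖Uhat ξ t‖ ^ 2)
        ≤ c₀ * (1 + t) ^ (-(1 / 12 : ℝ) - (j : ℝ) / 6) * M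
          + c₀ * (1 + t) ^ (-(ℓ : ℝ) / 2) *
              Real.sqrt (∫ ξ : ℝ, |ξ| ^ (2 * (j + ℓ)) * ‖U₀hat ξ‖ ^ 2) := by
  set A := ctilde * exp (c / 5) * (c / 5) ^ (-(2 * j + 1 : ℝ) / 6) * Gamma ((2 * j + 1) / 6) / 3
  set B := ctilde * exp (c / 5) * ℓ ! / (c / 5) ^ ℓ
  have hA : 0 ≤ A := by
    have := Gamma_pos_of_pos (show 0 < (2 * j + 1 : ℝ) / 6 by positivity)
    positivity
  have hB : 0 < B := by positivity
  have hM0 : 0 ≤ M := (norm_nonneg _).trans (hM 0)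
  refine ⟨√(A + B), by positivity, fun t ht => ?_⟩
  rw [mul_assoc, mul_assoc √(A + B)]
  exact sqrt_le_of_le_mul_sq_add_mul_sq hA hB.le (by positivity) (by positivity)
    (integral_pow_two_mul_mul_le j ℓ hc hct.le ht (fun ξ => hbound ξ t ht) (fun _ => sq_nonneg _)
      (fun _ => sq_nonneg _) (fun ξ => pow_le_pow_left₀ (norm_nonneg _) (hM ξ) 2) hflow hfhigh hint)
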